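/- Let $G$ be a compact group with probabilistic Haar measure $\mu$, and $G_0 \trianglelefteq G$ an open normal subgroup with probabilistic Haar measure $\mu_0$ and inclusion $j: G_0 \to G$. Let $(x_n)$ be a sequence in the space of conjugacy classes $X(G)$ that is equidistributed with respect to the measure induced by $\mu$. Let $k_n$ be the number of indices $i \le n$ with $x_i$ in the image of $X(j): X(G_0) \to X(G)$, and assume $\lim_{n\to\infty} k_n/n = 1/[G:G_0]$. Then the subsequence $(x_{n_k})$ of elements contained in the image of $X(j)$ is equidistributed with respect to the pushforward measure $j_*\mu_0$. -/

import Mathlib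

attribute [local instance] Classical.propDecidable

open MeasureTheory Filter Topology

/-!
Since `G₀` is open and normal, the indicator `1_{G₀} f` of a continuous class function `f` is
again a continuous class function, so equidistribution of `(x_n)` gives
`(1/N) ∑_{i < N, x_i ∈ G₀} f(x_i) → ∫_{G₀} f dμ`; taking `f = 1` shows `k_N / N → μ(G₀) > 0`.
Dividing the two limits gives `(1/k_N) ∑_{i < N, x_i ∈ G₀} f(x_i) → μ(G₀)⁻¹ ∫_{G₀} f dμ`, and by
uniqueness of the probability Haar measure on the compact group `G₀`, `j_* μ₀` is exactly the
normalised restriction `μ(G₀)⁻¹ μ|_{G₀}`.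
-/

theorem tendsto_inv_mul_of_tendsto_avg {𝕜 : Type*} [NormedField 𝕜] [CharZero 𝕜]
    {u v : ℕ → 𝕜} {a b : 𝕜} (ha : a ≠ 0)
    (hu : Tendsto (fun N : ℕ => (N : 𝕜)⁻¹ * u N) atTop (𝓝 a))
    (hv : Tendsto (fun N : ℕ => (N : 𝕜)⁻¹ * v N) atTop (𝓝 b)) :
    Tendsto (fun N => (u N)⁻¹ * v N) atTop (𝓝 (a⁻¹ * b)) := by
  refine ((hu.inv₀ ha).mul hv).congr' ?_
  filter_upwards [eventually_ne_atTop 0] with N hN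
  have hN' : (N : 𝕜) ≠ 0 := Nat.cast_ne_zero.mpr hN
  rw [mul_inv, inv_inv, mul_mul_mul_comm, mul_inv_cancel₀ hN', one_mul]

theorem Subgroup.Normal.indicator_conj {G M : Type*} [Group G] [Zero M] {H : Subgroup G}
    {f : G → M} (hH : H.Normal)
    (hf : ∀ g h : G, f (h * g * h⁻¹) = f g) (g h : G) :
    (H : Set G).indicator f (h * g * h⁻¹) = (H : Set G).indicator f g := by
  have hmem : h * g * h⁻¹ ∈ H ↔ g ∈ H := by rw [hH.mem_comm_iff, inv_mul_cancel_left]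
  simp only [Set.indicator_apply, SetLike.mem_coe, hmem, hf]

section OpenSubgroup

variable {G : Type*} [Group G] [TopologicalSpace G] [IsTopologicalGroup G]
  [MeasurableSpace G] [BorelSpace G] {H : Subgroup G}

theorem Subgroup.map_subtype_val_of_isHaarMeasure (hH : IsOpen (H : Set G)) [CompactSpace H]
    (μ : Measure G) [μ.IsHaarMeasure] (μ₀ : Measure H) [μ₀.IsHaarMeasure]
    [IsProbabilityMeasure μ₀] :
    μ₀.map Subtype.val = (μ H)⁻¹ • μ.restrict H := by
  have hμ_ne_zero : μ H ≠ 0 := hH.measure_ne_zero μ ⟨1, H.one_mem⟩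
  have hμ_ne_top : μ H ≠ ⊤ := (isCompact_iff_compactSpace.mpr ‹_›).measure_ne_top
  have hemb : MeasurableEmbedding (Subtype.val : H → G) :=
    hH.isOpenEmbedding_subtypeVal.measurableEmbedding
  have : (μ.comap Subtype.val : Measure H).IsHaarMeasure :=
    Measure.IsHaarMeasure.comap μ (mH := inferInstance) (f := H.subtype)
      hH.isOpenEmbedding_subtypeVal
  have : ((μ H)⁻¹ • μ.comap Subtype.val : Measure H).IsHaarMeasure :=
    Measure.IsHaarMeasure.smul _ (ENNReal.inv_ne_zero.mpr hμ_ne_top)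
      (ENNReal.inv_ne_top.mpr hμ_ne_zero)
  have : IsProbabilityMeasure ((μ H)⁻¹ • μ.comap Subtype.val : Measure H) := by
    constructor
    rw [Measure.smul_apply, smul_eq_mul, hemb.comap_apply, Set.image_univ, Subtype.range_coe,
      ENNReal.inv_mul_cancel hμ_ne_zero hμ_ne_top]
  rw [Measure.isHaarMeasure_eq_of_isProbabilityMeasure μ₀ ((μ H)⁻¹ • μ.comap Subtype.val),
    Measure.map_smul, hemb.map_comap, Subtype.range_coe]

theorem tendsto_avg_filter_mem_of_equidistributed [H.Normal] (hH : IsOpen (H : Set G))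
    (μ : Measure G) (x : ℕ → G)
    (hequi : ∀ f : G → ℂ, Continuous f → (∀ g h : G, f (h * g * h⁻¹) = f g) →
      Tendsto (fun N : ℕ => (N : ℂ)⁻¹ * ∑ i ∈ Finset.range N, f (x i))
        atTop (𝓝 (∫ g, f g ∂μ)))
    {f : G → ℂ} (hf : Continuous f) (hf_class : ∀ g h : G, f (h * g * h⁻¹) = f g) :
    Tendsto (fun N : ℕ => (N : ℂ)⁻¹ * ∑ i ∈ (Finset.range N).filter fun i => x i ∈ H, f (x i))
      atTop (𝓝 (∫ g in H, f g ∂μ)) := by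
  have hclopen : IsClopen (H : Set G) := ⟨H.isClosed_of_isOpen hH, hH⟩
  have h := hequi _ (hclopen.continuous_indicator hf) (‹H.Normal›.indicator_conj hf_class)
  rw [integral_indicator hH.measurableSet] at h
  simpa only [Finset.sum_filter, Set.indicator_apply, SetLike.mem_coe] using h

end OpenSubgroup

theorem stmt_13_general {G : Type*} [Group G] [TopologicalSpace G] [IsTopologicalGroup G]
    [CompactSpace G] [MeasurableSpace G] [BorelSpace G]
    (μ : Measure G) [μ.IsHaarMeasure]
    (G₀ : Subgroup G) [G₀.Normal] (hopen : IsOpen (G₀ : Set G))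
    (μ₀ : Measure G₀) [μ₀.IsHaarMeasure] [IsProbabilityMeasure μ₀]
    (x : ℕ → G)
    (hequi : ∀ f : G → ℂ, Continuous f → (∀ g h : G, f (h * g * h⁻¹) = f g) →
      Tendsto (fun N : ℕ => (N : ℂ)⁻¹ * ∑ i ∈ Finset.range N, f (x i))
        atTop (nhds (∫ g, f g ∂μ))) :
    ∀ f : G → ℂ, Continuous f → (∀ g h : G, f (h * g * h⁻¹) = f g) →
      Tendsto (fun N : ℕ =>
          ((((Finset.range N).filter fun i => x i ∈ G₀).card : ℂ))⁻¹ *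
            ∑ i ∈ (Finset.range N).filter fun i => x i ∈ G₀, f (x i))
        atTop (nhds (∫ g, f g ∂(μ₀.map Subtype.val))) := by
  intro f hf hf_class
  have : CompactSpace G₀ :=
    isCompact_iff_compactSpace.mp (G₀.isClosed_of_isOpen hopen).isCompact
  have hμG₀ : μ.real G₀ ≠ 0 :=
    (ENNReal.toReal_pos (hopen.measure_ne_zero μ ⟨1, G₀.one_mem⟩) (measure_ne_top μ _)).ne'
  have hcount := tendsto_avg_filter_mem_of_equidistributed hopen μ x hequi
    (f := fun _ => 1) continuous_const fun _ _ => rfl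
  simp only [Finset.sum_const, nsmul_eq_mul, mul_one, setIntegral_const, Complex.real_smul]
    at hcount
  rw [G₀.map_subtype_val_of_isHaarMeasure hopen μ μ₀, integral_smul_measure, ENNReal.toReal_inv,
    Complex.real_smul, Complex.ofReal_inv, ← measureReal_def]
  exact tendsto_inv_mul_of_tendsto_avg (by exact_mod_cast hμG₀) hcount
    (tendsto_avg_filter_mem_of_equidistributed hopen μ x hequi hf hf_class)

/-- `G` compact with probability Haar measure `μ`, `G₀ ⊴ G` open normal with
probability Haar measure `μ₀` and inclusion `j : G₀ → G`.  Conjugacy classes and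
equidistribution are expressed through continuous class functions; since `G₀` is normal,
a class lies in the image of `X(j) : X(G₀) → X(G)` iff its representative lies in `G₀`.
If the sequence `(x_n)` of classes is equidistributed for `μ` and the proportion
`k_n/n` of terms lying in the image of `X(j)` tends to `1/[G:G₀]`, then the subsequence of
terms lying in the image of `X(j)` is equidistributed for the pushforward `j_* μ₀`. -/
theorem stmt_13 {G : Type*} [Group G] [TopologicalSpace G] [IsTopologicalGroup G]
    [CompactSpace G] [MeasurableSpace G] [BorelSpace G]
    (μ : Measure G) [μ.IsHaarMeasure] [IsProbabilityMeasure μ]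
    (G₀ : Subgroup G) [G₀.Normal] (hopen : IsOpen (G₀ : Set G))
    (μ₀ : Measure G₀) [μ₀.IsHaarMeasure] [IsProbabilityMeasure μ₀]
    (x : ℕ → G)
    (hequi : ∀ f : G → ℂ, Continuous f → (∀ g h : G, f (h * g * h⁻¹) = f g) →
      Tendsto (fun N : ℕ => (N : ℂ)⁻¹ * ∑ i ∈ Finset.range N, f (x i))
        atTop (nhds (∫ g, f g ∂μ)))
    (hprop : Tendsto
      (fun N : ℕ => (((Finset.range N).filter fun i => x i ∈ G₀).card : ℝ) / (N : ℝ))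
      atTop (nhds (1 / (G₀.index : ℝ)))) :
    ∀ f : G → ℂ, Continuous f → (∀ g h : G, f (h * g * h⁻¹) = f g) →
      Tendsto (fun N : ℕ =>
          ((((Finset.range N).filter fun i => x i ∈ G₀).card : ℂ))⁻¹ *
            ∑ i ∈ (Finset.range N).filter fun i => x i ∈ G₀, f (x i))
        atTop (nhds (∫ g, f g ∂(μ₀.map Subtype.val))) :=
  stmt_13_general μ G₀ hopen μ₀ x hequi
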